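/- Let u, v ∈ {1,2}^{ℤ_{>0}}, let f: X_u → X_v be a bi-Lipschitz homeomorphism with |log dil(f)| + |log dil(f⁻¹)| < log 2, and let P: ℤ_{>0} → ℤ_{>0} be the associated bijection with f(I(n,u_n)) = I(P(n), v_{P(n)}) and n + u_n = P(n) + v_{P(n)} for all n. Then P(n) = n for all n ∈ ℤ_{>0}. -/
import Mathlib


open ENNReal

/-- The dilation (smallest Lipschitz constant) of a map between metric spaces. -/
noncomputable def dil {X : Type*} {Y : Type*} [MetricSpace X] [MetricSpace Y]
    (f : X → Y) : ℝ :=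
  sInf {K : ℝ | ∀ x y : X, dist (f x) (f y) ≤ K * dist x y}

/-- A bijection is a bi-Lipschitz homeomorphism if it and its inverse are Lipschitz. -/
def IsBiLipschitzEquiv {X : Type*} {Y : Type*} [MetricSpace X] [MetricSpace Y]
    (f : X ≃ Y) : Prop :=
  (∃ K : NNReal, LipschitzWith K f) ∧ (∃ K : NNReal, LipschitzWith K f.symm)

/-- The quantity `|log dil f| + |log dil f⁻¹|`. -/
noncomputable def lipCost {X : Type*} {Y : Type*} [MetricSpace X] [MetricSpace Y]
    (f : X ≃ Y) : ℝ :=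
  |Real.log (dil (f : X → Y))| + |Real.log (dil (f.symm : Y → X))|

/-- The Lipschitz distance: the infimum of `|log dil f| + |log dil f⁻¹|` over all
bi-Lipschitz homeomorphisms `f : X → Y` (`∞` if none exists). -/
noncomputable def lipDist (X : Type*) (Y : Type*) [MetricSpace X] [MetricSpace Y] : ℝ≥0∞ :=
  ⨅ (f : X ≃ Y) (_ : IsBiLipschitzEquiv f), ENNReal.ofReal (lipCost f)

/-- The interval `I(n,m) = [1/2^n, 1/2^n + 1/2^(n+m)]`. -/
def Iset (n m : ℕ) : Set ℝ := Set.Icc ((1:ℝ)/2^n) ((1:ℝ)/2^n + 1/2^(n+m))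

/-- `X_u = {0} ∪ ⋃_{n ≥ 1} I(n, u_n)`, with the Euclidean metric inherited from `ℝ`. -/
def Xset (u : ℕ+ → ℕ) : Set ℝ := {0} ∪ ⋃ n : ℕ+, Iset (n : ℕ) (u n)

lemma two_le_dil {X Y : Type*} [MetricSpace X] [MetricSpace Y] (f : X → Y)
    (hne : ∃ K : NNReal, LipschitzWith K f)
    (x y : X) (hxy : 0 < dist x y) (h : 2 * dist x y ≤ dist (f x) (f y)) :
    2 ≤ dil f := by
  obtain ⟨K, hK⟩ := hne
  unfold dil
  refine le_csInf ⟨(K : ℝ), ?_⟩ ?_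
  · intro a b; exact hK.dist_le_mul a b
  · intro b hb; nlinarith [hb x y]

lemma zero_mem_Xset (u : ℕ+ → ℕ) : (0:ℝ) ∈ Xset u := Or.inl rfl

lemma left_mem_Iset (n m : ℕ) : (1:ℝ)/2^n ∈ Iset n m :=
  ⟨le_refl _, le_add_of_nonneg_right (by positivity)⟩

lemma Iset_subset_Xset (u : ℕ+ → ℕ) (n : ℕ+) : Iset (n : ℕ) (u n) ⊆ Xset u :=
  fun x hx => Or.inr (Set.mem_iUnion.mpr ⟨n, hx⟩)

lemma pos_of_mem_Iset {x : ℝ} {n m : ℕ} (hx : x ∈ Iset n m) : 0 < x :=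
  lt_of_lt_of_le (by positivity) hx.1

/-- Second step: under the hypotheses of Lemma 2.2 together with
`n + u_n = P(n) + v_{P(n)}`, the permutation `P` is the identity. -/
theorem step_two (u v : ℕ+ → ℕ) (hu : ∀ n, u n = 1 ∨ u n = 2)
    (hv : ∀ n, v n = 1 ∨ v n = 2) (f : ↥(Xset u) ≃ ↥(Xset v))
    (hbl : IsBiLipschitzEquiv f) (hcost : lipCost f < Real.log 2)
    (P : ℕ+ ≃ ℕ+)
    (hP : ∀ n : ℕ+,
      (Subtype.val ∘ f) '' {x : Xset u | (x : ℝ) ∈ Iset (n : ℕ) (u n)}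
        = Iset ((P n : ℕ+) : ℕ) (v (P n)))
    (hsum : ∀ n : ℕ+, (n : ℕ) + u n = ((P n : ℕ+) : ℕ) + v (P n)) :
    ∀ n : ℕ+, P n = n := by
  set z0 : ↥(Xset u) := ⟨0, zero_mem_Xset u⟩ with hz0
  -- f sends 0 to 0
  have hf0 : ((f z0 : ℝ)) = 0 := by
    by_contra h0
    have hmem : ((f z0 : ℝ)) ∈ Xset v := (f z0).2
    rcases hmem with h | h
    · exact h0 h
    · obtain ⟨m, hm⟩ := Set.mem_iUnion.mp h
      set k := P.symm m with hk
      have hPk : P k = m := P.apply_symm_apply m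
      have hm' : ((f z0 : ℝ)) ∈ Iset ((P k : ℕ+) : ℕ) (v (P k)) := by rw [hPk]; exact hm
      rw [← hP k] at hm'
      obtain ⟨x, hx, hfx⟩ := hm'
      have : f x = f z0 := Subtype.coe_injective hfx
      have hxz : x = z0 := f.injective this
      rw [hxz] at hx
      exact absurd (pos_of_mem_Iset hx) (lt_irrefl 0)
  have hcost_ge : ∀ g : ↥(Xset u) ≃ ↥(Xset v), (2 ≤ dil (g : _ → _)) → Real.log 2 ≤ lipCost g := by
    intro g hg
    have h1 : Real.log 2 ≤ Real.log (dil (g : _ → _)) :=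
      Real.log_le_log (by norm_num) hg
    calc Real.log 2 ≤ Real.log (dil (g : _ → _)) := h1
      _ ≤ |Real.log (dil (g : _ → _))| := le_abs_self _
      _ ≤ lipCost g := le_add_of_nonneg_right (abs_nonneg _)
  intro n
  by_contra hne
  have hne' : ((P n : ℕ+) : ℕ) ≠ (n : ℕ) := fun h => hne (PNat.coe_injective h)
  rcases lt_or_gt_of_ne hne' with hlt | hgt
  · -- P n < n : dil f ≥ 2
    have hpow : (2:ℝ) * (1/2^(n:ℕ)) ≤ 1/2^((P n : ℕ+) : ℕ) := by
      have h1 : ((P n : ℕ+) : ℕ) + 1 ≤ (n : ℕ) := hlt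
      have h2 : (2:ℝ)^(((P n : ℕ+) : ℕ) + 1) ≤ 2^(n:ℕ) :=
        pow_le_pow_right₀ one_le_two h1
      rw [pow_succ] at h2
      rw [mul_one_div, div_le_div_iff₀ (by positivity) (by positivity)]
      nlinarith
    set xu : ↥(Xset u) := ⟨(1:ℝ)/2^(n:ℕ), Iset_subset_Xset u n (left_mem_Iset _ _)⟩ with hxu
    have hfx : ((f xu : ℝ)) ∈ Iset ((P n : ℕ+) : ℕ) (v (P n)) := by
      rw [← hP n]
      exact ⟨xu, left_mem_Iset _ _, rfl⟩
    have hdx : dist xu z0 = 1/2^(n:ℕ) := by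
      rw [Subtype.dist_eq, Real.dist_eq]
      show |(1:ℝ)/2^(n:ℕ) - 0| = _
      rw [sub_zero]
      exact abs_of_pos (by positivity)
    have hdf : dist (f xu) (f z0) = ((f xu : ℝ)) := by
      rw [Subtype.dist_eq, hf0, Real.dist_eq, sub_zero, abs_of_pos (pos_of_mem_Iset hfx)]
    have h2d : 2 * dist xu z0 ≤ dist (f xu) (f z0) := by
      rw [hdx, hdf]
      exact le_trans hpow hfx.1
    have hdil : 2 ≤ dil (f : _ → _) :=
      two_le_dil _ hbl.1 xu z0 (by rw [hdx]; positivity) h2d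
    linarith [hcost_ge f hdil]
  · -- P n > n : dil f.symm ≥ 2
    have hpow : (2:ℝ) * (1/2^((P n : ℕ+) : ℕ)) ≤ 1/2^(n:ℕ) := by
      have h1 : (n : ℕ) + 1 ≤ ((P n : ℕ+) : ℕ) := hgt
      have h2 : (2:ℝ)^((n:ℕ) + 1) ≤ 2^((P n : ℕ+) : ℕ) :=
        pow_le_pow_right₀ one_le_two h1
      rw [pow_succ] at h2
      rw [mul_one_div, div_le_div_iff₀ (by positivity) (by positivity)]
      nlinarith
    have hy : ((1:ℝ)/2^((P n : ℕ+) : ℕ)) ∈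
        (Subtype.val ∘ f) '' {x : Xset u | (x : ℝ) ∈ Iset (n : ℕ) (u n)} := by
      rw [hP n]; exact left_mem_Iset _ _
    obtain ⟨xu, hxu, hfxu⟩ := hy
    set yv : ↥(Xset v) := ⟨(1:ℝ)/2^((P n : ℕ+) : ℕ),
      Iset_subset_Xset v (P n) (left_mem_Iset _ _)⟩ with hyv
    have hfxy : f xu = yv := Subtype.coe_injective hfxu
    set z0v : ↥(Xset v) := ⟨0, zero_mem_Xset v⟩ with hz0v
    have hfz0 : f z0 = z0v := Subtype.coe_injective hf0
    have hsx : f.symm yv = xu := by rw [← hfxy, Equiv.symm_apply_apply]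
    have hsz : f.symm z0v = z0 := by rw [← hfz0, Equiv.symm_apply_apply]
    have hdy : dist yv z0v = 1/2^((P n : ℕ+) : ℕ) := by
      rw [Subtype.dist_eq, Real.dist_eq]
      show |(1:ℝ)/2^((P n : ℕ+) : ℕ) - 0| = _
      rw [sub_zero]
      exact abs_of_pos (by positivity)
    have hds : dist (f.symm yv) (f.symm z0v) = ((xu : ℝ)) := by
      rw [hsx, hsz, Subtype.dist_eq]
      simp [hz0, Real.dist_eq, abs_of_pos (pos_of_mem_Iset hxu)]
    have h2d : 2 * dist yv z0v ≤ dist (f.symm yv) (f.symm z0v) := by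
      rw [hdy, hds]
      exact le_trans hpow hxu.1
    have hdil : 2 ≤ dil (f.symm : _ → _) :=
      two_le_dil _ hbl.2 yv z0v (by rw [hdy]; positivity) h2d
    have : Real.log 2 ≤ lipCost f := by
      have h1 : Real.log 2 ≤ Real.log (dil (f.symm : _ → _)) :=
        Real.log_le_log (by norm_num) hdil
      calc Real.log 2 ≤ Real.log (dil (f.symm : _ → _)) := h1
        _ ≤ |Real.log (dil (f.symm : _ → _))| := le_abs_self _
        _ ≤ lipCost f := le_add_of_nonneg_left (abs_nonneg _)
    linarith
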